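/- Let p be a prime, A a commutative ring with pA = 0, n ≥ 0, and φ : F → G an isomorphism of formal group laws over A with linear coefficient c := φ′(0) ∈ A^×. Suppose F has height ≥ n, i.e. the coefficient of x^i in [p]_F is 0 for all i < p^n. Then G also has height ≥ n, and the coefficients a and b of x^{p^n} in [p]_F and [p]_G respectively satisfy b·c^{p^n} = c·a, i.e. b = c^{1−p^n}·a. In particular a = 0 if and only if b = 0, and a is a unit if and only if b is a unit, so height ≥ n, height ≥ n+1, and strict height n are isomorphism invariants. (This is the transformation law making v_n a section of ω^{⊗(p^n−1)}.) -/

import Mathlib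

noncomputable section

namespace FGL

open Finset

variable {A B : Type*} [CommRing A] [CommRing B] {τ : Type*}

/-- The total degree of a monomial exponent. -/
def deg {σ : Type*} (d : σ →₀ ℕ) : ℕ := d.sum fun _ n => n

/-- The exponent `(i, j)` as an element of `Fin 2 →₀ ℕ`. -/
def mon2 (i j : ℕ) : Fin 2 →₀ ℕ := Finsupp.single 0 i + Finsupp.single 1 j

/-- Substitution `F(g, h)` of two power series (each assumed to have zero constant
term) into a two-variable power series `F`. -/
def subst2 (F : MvPowerSeries (Fin 2) A) (g h : MvPowerSeries τ A) :
    MvPowerSeries τ A :=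
  fun d => ∑ e ∈ range (deg d + 1) ×ˢ range (deg d + 1),
    MvPowerSeries.coeff (mon2 e.1 e.2) F * MvPowerSeries.coeff d (g ^ e.1 * h ^ e.2)

/-- Substitution `f(g)` of a power series `g` (assumed to have zero constant term)
into a one-variable power series `f`. -/
def substPS (f : PowerSeries A) (g : MvPowerSeries τ A) : MvPowerSeries τ A :=
  fun d => ∑ n ∈ range (deg d + 1),
    PowerSeries.coeff n f * MvPowerSeries.coeff d (g ^ n)

/-- Composition `f(g)` of one-variable power series (`g` has zero constant term). -/
def comp (f g : PowerSeries A) : PowerSeries A := substPS f g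

/-- `F` is a (commutative, one-dimensional) formal group law:
`F(x,0) = x`, `F(0,y) = y`, `F(x,y) = F(y,x)` and `F(F(x,y),z) = F(x,F(y,z))`. -/
def IsFGL (F : MvPowerSeries (Fin 2) A) : Prop :=
  subst2 F (MvPowerSeries.X 0) 0 = MvPowerSeries.X 0 ∧
  subst2 F 0 (MvPowerSeries.X 1) = MvPowerSeries.X 1 ∧
  subst2 F (MvPowerSeries.X 1) (MvPowerSeries.X 0) = F ∧
  subst2 F (subst2 F (MvPowerSeries.X 0) (MvPowerSeries.X 1))
      (MvPowerSeries.X 2 : MvPowerSeries (Fin 3) A)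
    = subst2 F (MvPowerSeries.X 0) (subst2 F (MvPowerSeries.X 1) (MvPowerSeries.X 2))

/-- `f` is a homomorphism of formal group laws `F → G`:
`f(0) = 0` and `f(F(x,y)) = G(f(x), f(y))`. -/
def IsHom (F G : MvPowerSeries (Fin 2) A) (f : PowerSeries A) : Prop :=
  PowerSeries.constantCoeff f = 0 ∧
  substPS f F = subst2 G (substPS f (MvPowerSeries.X 0)) (substPS f (MvPowerSeries.X 1))

/-- `f` is an isomorphism of formal group laws `F → G`: a homomorphism whose
linear coefficient is a unit. -/
def IsIso (F G : MvPowerSeries (Fin 2) A) (f : PowerSeries A) : Prop :=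
  IsHom F G f ∧ IsUnit (PowerSeries.coeff 1 f)

/-- `f` is a strict isomorphism of formal group laws `F → G`: a homomorphism whose
linear coefficient is `1`. -/
def IsStrictIso (F G : MvPowerSeries (Fin 2) A) (f : PowerSeries A) : Prop :=
  IsHom F G f ∧ PowerSeries.coeff 1 f = 1

/-- The `n`-series `[n]_F` of a formal group law, defined by `[0]_F = 0` and
`[n+1]_F(x) = F(x, [n]_F(x))`. -/
def nSeries (F : MvPowerSeries (Fin 2) A) : ℕ → PowerSeries A
  | 0 => 0
  | n + 1 => subst2 F PowerSeries.X (nSeries F n)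

/-- `F` has height `≥ n` (at the prime `p`): the coefficient of `x^i` in `[p]_F`
vanishes for all `i < p^n`. -/
def HeightGE (p : ℕ) (F : MvPowerSeries (Fin 2) A) (n : ℕ) : Prop :=
  ∀ i < p ^ n, PowerSeries.coeff i (nSeries F p) = 0

/-- `F` has strict height `n` (at the prime `p`): it has height `≥ n` and the
coefficient of `x^{p^n}` in `[p]_F` is a unit. -/
def StrictHeight (p : ℕ) (F : MvPowerSeries (Fin 2) A) (n : ℕ) : Prop :=
  HeightGE p F n ∧ IsUnit (PowerSeries.coeff (p ^ n) (nSeries F p))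

/-- Coefficients of the compositional inverse of a power series `f` with `f(0) = 0`
and invertible linear coefficient. -/
def invCoeff (f : PowerSeries A) : ℕ → A
  | 0 => 0
  | 1 => Ring.inverse (PowerSeries.coeff 1 f)
  | n + 2 =>
    - Ring.inverse ((PowerSeries.coeff 1 f) ^ (n + 2)) *
      ∑ k ∈ (range (n + 2)).attach,
        invCoeff f k.1 * PowerSeries.coeff (n + 2) (f ^ (k.1 : ℕ))
  decreasing_by exact Finset.mem_range.mp k.2

/-- The compositional inverse of a power series `f` with `f(0) = 0` and invertible
linear coefficient. -/
def compInv (f : PowerSeries A) : PowerSeries A := PowerSeries.mk (invCoeff f)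

end FGL

/-! An isomorphism intertwines the `p`-series, `φ ∘ [p]_F = [p]_G ∘ φ`: induct on `m` in `[m]`,
using `φ(F(x,y)) = G(φ x, φ y)` and associativity of substitution, which comes from Mathlib once
the truncated sums `subst2`, `substPS` are identified with `MvPowerSeries.subst`.

Let `c = φ'(0)` and `N = p^n`. As `φ ≡ c x` modulo `x²` and `x^N ∣ [p]_F`, the left side is
`c·[p]_F` modulo `x^{2N}`. If `x^m ∣ [p]_G`, then `[p]_G(φ) ≡ b_m c^m x^m` modulo `x^{m+1}`, where
`b_m` is the `x^m`-coefficient of `[p]_G`. Comparing coefficients degree by degree, `c` being a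
unit, gives `b_m = 0` for `m < N` and `b_N c^N = c a` in degree `N`. -/

namespace FGL

variable {A : Type*} [CommRing A]

section Substitution

open Finset MvPowerSeries

variable {τ : Type*}

lemma coeff_pow_eq_zero_of_deg_lt {g : MvPowerSeries τ A} (hg : constantCoeff g = 0) {k : ℕ}
    {d : τ →₀ ℕ} (hd : deg d < k) : coeff d (g ^ k) = 0 :=
  coeff_of_lt_order ((Nat.cast_lt.mpr hd).trans_le (le_order_pow_of_constantCoeff_eq_zero k hg))

lemma coeff_pow_mul_pow_eq_zero_of_deg_lt {g h : MvPowerSeries τ A}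
    (hg : constantCoeff g = 0) (hh : constantCoeff h = 0) {i j : ℕ} {d : τ →₀ ℕ}
    (hd : deg d < i + j) : coeff d (g ^ i * h ^ j) = 0 := by
  apply coeff_of_lt_order
  calc (d.degree : ℕ∞) < i + j := by exact_mod_cast hd
    _ ≤ (g ^ i).order + (h ^ j).order :=
      add_le_add (le_order_pow_of_constantCoeff_eq_zero i hg)
        (le_order_pow_of_constantCoeff_eq_zero j hh)
    _ ≤ (g ^ i * h ^ j).order := le_order_mul

lemma substPS_eq_subst (f : PowerSeries A) {g : MvPowerSeries τ A}
    (hg : constantCoeff g = 0) : substPS f g = PowerSeries.subst g f := by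
  ext d
  rw [PowerSeries.coeff_subst (PowerSeries.HasSubst.of_constantCoeff_zero hg),
    finsum_eq_sum_of_support_subset _ (s := range (deg d + 1))]
  · rfl
  · intro k hk
    by_contra hkd
    rw [coe_range, Set.mem_Iio, not_lt, Nat.succ_le_iff] at hkd
    exact hk (by simp only [coeff_pow_eq_zero_of_deg_lt hg hkd, smul_zero])

lemma mon2_injective : Function.Injective fun e : ℕ × ℕ => mon2 e.1 e.2 := by
  rintro ⟨i, j⟩ ⟨i', j'⟩ h
  have h0 := DFunLike.congr_fun h 0
  have h1 := DFunLike.congr_fun h 1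
  simp only [mon2, Finsupp.add_apply, Finsupp.single_apply] at h0 h1
  simp_all

lemma eq_mon2 (e : Fin 2 →₀ ℕ) : e = mon2 (e 0) (e 1) := by
  ext s
  fin_cases s <;> simp [mon2]

lemma mon2_prod_pow (g h : MvPowerSeries τ A) (i j : ℕ) :
    (mon2 i j).prod (fun s k => ![g, h] s ^ k) = g ^ i * h ^ j := by
  rw [Finsupp.prod_fintype _ _ (fun _ => pow_zero _), Fin.prod_univ_two]
  simp [mon2]

lemma subst2_eq_subst (F : MvPowerSeries (Fin 2) A) {g h : MvPowerSeries τ A}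
    (hg : constantCoeff g = 0) (hh : constantCoeff h = 0) :
    subst2 F g h = subst ![g, h] F := by
  ext d
  have hgh : HasSubst ![g, h] :=
    hasSubst_of_constantCoeff_zero (by simp [Fin.forall_fin_two, hg, hh])
  rw [coeff_subst hgh, finsum_eq_sum_of_support_subset _
    (s := (range (deg d + 1) ×ˢ range (deg d + 1)).map ⟨_, mon2_injective⟩), sum_map]
  · simp only [Function.Embedding.coeFn_mk, mon2_prod_pow, smul_eq_mul]
    rfl
  · intro e he
    rw [Function.mem_support, eq_mon2 e, mon2_prod_pow, smul_eq_mul] at he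
    have hed : e 0 + e 1 ≤ deg d := by
      by_contra! hlt
      exact he (by rw [coeff_pow_mul_pow_eq_zero_of_deg_lt hg hh hlt, mul_zero])
    rw [coe_map, Set.mem_image]
    exact ⟨(e 0, e 1), by simp only [coe_product, coe_range, Set.mem_prod, Set.mem_Iio]; omega,
      (eq_mon2 e).symm⟩

lemma constantCoeff_subst2 (F : MvPowerSeries (Fin 2) A) (g h : MvPowerSeries τ A) :
    constantCoeff (subst2 F g h) = constantCoeff F := by
  rw [← coeff_zero_eq_constantCoeff_apply]
  change ∑ e ∈ range (deg (0 : τ →₀ ℕ) + 1) ×ˢ range (deg (0 : τ →₀ ℕ) + 1), _ = _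
  simp [deg, mon2]

lemma IsFGL.constantCoeff_eq_zero {F : MvPowerSeries (Fin 2) A} (hF : IsFGL F) :
    constantCoeff F = 0 := by
  simpa [constantCoeff_subst2] using congrArg constantCoeff hF.1

lemma constantCoeff_nSeries {F : MvPowerSeries (Fin 2) A} (hF : constantCoeff F = 0) :
    ∀ m, PowerSeries.constantCoeff (nSeries F m) = 0
  | 0 => map_zero _
  | _ + 1 => (constantCoeff_subst2 F _ _).trans hF

lemma nSeries_succ {F : MvPowerSeries (Fin 2) A} (hF : constantCoeff F = 0) (m : ℕ) :
    nSeries F (m + 1) = subst ![PowerSeries.X, nSeries F m] F :=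
  subst2_eq_subst F (constantCoeff_X ()) (constantCoeff_nSeries hF m)

lemma IsHom.subst_eq {F G : MvPowerSeries (Fin 2) A} {φ : PowerSeries A}
    (hF : constantCoeff F = 0) (hφ : IsHom F G φ) :
    PowerSeries.subst F φ = subst ![PowerSeries.subst (X 0) φ, PowerSeries.subst (X 1) φ] G := by
  have hφX (i : Fin 2) :
      constantCoeff (PowerSeries.subst (X i : MvPowerSeries (Fin 2) A) φ) = 0 :=
    PowerSeries.constantCoeff_subst_eq_zero (constantCoeff_X i) φ hφ.1
  have := hφ.2
  rwa [substPS_eq_subst φ hF, substPS_eq_subst φ (constantCoeff_X 0),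
    substPS_eq_subst φ (constantCoeff_X 1), subst2_eq_subst G (hφX 0) (hφX 1)] at this

lemma subst_powerSeriesSubst {σ : Type*} {a : MvPowerSeries σ A} (ha : PowerSeries.HasSubst a)
    {b : σ → MvPowerSeries τ A} (hb : HasSubst b) (f : PowerSeries A) :
    subst b (PowerSeries.subst a f) = PowerSeries.subst (subst b a) f :=
  subst_comp_subst_apply ha.const hb f

lemma powerSeriesSubst_subst {σ : Type*} {a : σ → PowerSeries A} (ha : HasSubst a)
    {b : MvPowerSeries τ A} (hb : PowerSeries.HasSubst b) (F : MvPowerSeries σ A) :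
    PowerSeries.subst b (subst a F) = subst (fun s => PowerSeries.subst b (a s)) F :=
  subst_comp_subst_apply ha hb.const F

lemma hasSubst_X_nSeries {F : MvPowerSeries (Fin 2) A} (hF : constantCoeff F = 0) (m : ℕ) :
    HasSubst ![PowerSeries.X, nSeries F m] :=
  hasSubst_of_constantCoeff_zero
    (Fin.forall_fin_two.mpr ⟨constantCoeff_X (), constantCoeff_nSeries hF m⟩)

lemma IsHom.subst_nSeries {F G : MvPowerSeries (Fin 2) A} {φ : PowerSeries A}
    (hF : constantCoeff F = 0) (hG : constantCoeff G = 0) (hφ : IsHom F G φ) :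
    ∀ m, PowerSeries.subst (nSeries F m) φ = PowerSeries.subst φ (nSeries G m)
  | 0 => by
    change PowerSeries.subst 0 φ = PowerSeries.subst φ 0
    rw [PowerSeries.subst_zero_of_constantCoeff_zero hφ.1,
      ← PowerSeries.coe_substAlgHom (.of_constantCoeff_zero' hφ.1), map_zero]
  | m + 1 => by
    have hφ₀ : PowerSeries.HasSubst φ := PowerSeries.HasSubst.of_constantCoeff_zero' hφ.1
    have hbF := hasSubst_X_nSeries hF m
    have hbG := hasSubst_X_nSeries hG m
    calc PowerSeries.subst (nSeries F (m + 1)) φ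
        = subst ![PowerSeries.X, nSeries F m] (PowerSeries.subst F φ) := by
          rw [nSeries_succ hF, subst_powerSeriesSubst (.of_constantCoeff_zero hF) hbF]
      _ = subst ![PowerSeries.X, nSeries F m]
            (subst ![PowerSeries.subst (X 0) φ, PowerSeries.subst (X 1) φ] G) := by
          rw [hφ.subst_eq hF]
      _ = subst ![φ, PowerSeries.subst φ (nSeries G m)] G := by
          rw [subst_comp_subst_apply (hasSubst_of_constantCoeff_zero fun s => ?_) hbF]
          · congr 1
            ext1 s
            fin_cases s <;>
              simp [subst_powerSeriesSubst (.of_constantCoeff_zero (constantCoeff_X _)) hbF,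
                subst_X hbF, PowerSeries.X_subst, IsHom.subst_nSeries hF hG hφ m]
          · fin_cases s <;>
              exact PowerSeries.constantCoeff_subst_eq_zero (constantCoeff_X _) φ hφ.1
      _ = PowerSeries.subst φ (subst ![PowerSeries.X, nSeries G m] G) := by
          rw [powerSeriesSubst_subst hbG hφ₀]
          congr 1
          ext1 s
          fin_cases s <;> simp [PowerSeries.subst_X hφ₀]
      _ = PowerSeries.subst φ (nSeries G (m + 1)) := by rw [nSeries_succ hG]

end Substitution

section Coefficients

open PowerSeries

lemma constantCoeff_subst_eq_constantCoeff {a : A⟦X⟧} (ha : constantCoeff a = 0)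
    (f : A⟦X⟧) : constantCoeff (subst a f) = constantCoeff f := by
  rw [← substPS_eq_subst f ha, ← coeff_zero_eq_constantCoeff_apply]
  change ∑ n ∈ Finset.range (deg (Finsupp.single () 0) + 1), _ = _
  simp [deg]

lemma coeff_subst_of_X_pow_dvd_outer {φ g : A⟦X⟧} (hφ : constantCoeff φ = 0) {m : ℕ}
    (hg : X ^ m ∣ g) : coeff m (subst φ g) = coeff m g * coeff 1 φ ^ m := by
  obtain ⟨g', rfl⟩ := hg
  obtain ⟨φ', rfl⟩ := X_dvd_iff.mpr hφ
  have hXφ : HasSubst (X * φ') := .of_constantCoeff_zero' (by simp)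
  rw [subst_mul hXφ, subst_pow hXφ, subst_X hXφ, mul_pow, mul_assoc, coeff_X_pow_mul', if_pos le_rfl, Nat.sub_self, coeff_X_pow_mul', if_pos le_rfl,
    Nat.sub_self, coeff_zero_eq_constantCoeff_apply, coeff_zero_eq_constantCoeff_apply, map_mul,
    map_pow, constantCoeff_subst_eq_constantCoeff hφ, coeff_succ_X_mul 0,
    coeff_zero_eq_constantCoeff_apply, mul_comm]

lemma coeff_subst_of_X_pow_dvd_inner {φ f : A⟦X⟧} (hφ : constantCoeff φ = 0) {N m : ℕ}
    (hf : X ^ N ∣ f) (hm : m < 2 * N) : coeff m (subst f φ) = coeff 1 φ * coeff m f := by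
  obtain ⟨ψ, hψ⟩ : X ^ 2 ∣ φ - C (coeff 1 φ) * X := by
    refine X_pow_dvd_iff.mpr fun i hi => ?_
    interval_cases i <;> simp [hφ]
  have hf' : HasSubst f := .of_constantCoeff_zero' <| by
    rw [← coeff_zero_eq_constantCoeff_apply]
    exact X_pow_dvd_iff.mp hf 0 (by omega)
  rw [sub_eq_iff_eq_add'] at hψ
  have hf2 : X ^ (2 * N) ∣ f ^ 2 * subst f ψ := by
    rw [pow_mul']
    exact (pow_dvd_pow_of_dvd hf 2).mul_right _
  conv_lhs => rw [hψ, subst_add hf', subst_mul hf', subst_mul hf', subst_pow hf', subst_C,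
    subst_X hf']
  rw [map_add, show (MvPowerSeries.C (coeff 1 φ) : A⟦X⟧) = C (coeff 1 φ) from rfl, coeff_C_mul,
    X_pow_dvd_iff.mp hf2 m hm, add_zero]

lemma X_pow_dvd_of_subst_eq {f g φ : A⟦X⟧} (hφ : constantCoeff φ = 0) (hc : IsUnit (coeff 1 φ))
    (h : subst f φ = subst φ g) {N : ℕ} (hf : X ^ N ∣ f) : X ^ N ∣ g := by
  suffices ∀ m ≤ N, X ^ m ∣ g from this N le_rfl
  intro m
  induction m with
  | zero => simp
  | succ m ih =>
    intro hm
    have hgm := ih (by omega)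
    have hcoeff : coeff m g * coeff 1 φ ^ m = 0 := by
      rw [← coeff_subst_of_X_pow_dvd_outer hφ hgm, ← h,
        coeff_subst_of_X_pow_dvd_inner hφ hf (by omega), X_pow_dvd_iff.mp hf m (by omega),
        mul_zero]
    refine X_pow_dvd_iff.mpr fun i hi => ?_
    rcases Nat.lt_succ_iff_lt_or_eq.mp hi with hi | rfl
    · exact X_pow_dvd_iff.mp hgm i hi
    · exact (hc.pow i).mul_left_eq_zero.mp hcoeff

end Coefficients

end FGL

open FGL

theorem vn_transformation_rule_general (p : ℕ) (hp : p.Prime) (A : Type*) [CommRing A] (n : ℕ)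
    (F G : MvPowerSeries (Fin 2) A) (hF : IsFGL F) (hG : IsFGL G)
    (φ : PowerSeries A) (hφ : IsIso F G φ)
    (hht : ∀ i < p ^ n, PowerSeries.coeff i (nSeries F p) = 0) :
    (∀ i < p ^ n, PowerSeries.coeff i (nSeries G p) = 0) ∧
    PowerSeries.coeff (p ^ n) (nSeries G p) * PowerSeries.coeff 1 φ ^ p ^ n =
      PowerSeries.coeff 1 φ * PowerSeries.coeff (p ^ n) (nSeries F p) ∧
    (PowerSeries.coeff (p ^ n) (nSeries F p) = 0 ↔
      PowerSeries.coeff (p ^ n) (nSeries G p) = 0) ∧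
    (IsUnit (PowerSeries.coeff (p ^ n) (nSeries F p)) ↔
      IsUnit (PowerSeries.coeff (p ^ n) (nSeries G p))) := by
  obtain ⟨hom, hc⟩ := hφ
  have key := hom.subst_nSeries hF.constantCoeff_eq_zero hG.constantCoeff_eq_zero p
  have hf : PowerSeries.X ^ p ^ n ∣ nSeries F p := PowerSeries.X_pow_dvd_iff.mpr hht
  have hg : PowerSeries.X ^ p ^ n ∣ nSeries G p := X_pow_dvd_of_subst_eq hom.1 hc key hf
  have hrule : PowerSeries.coeff (p ^ n) (nSeries G p) * PowerSeries.coeff 1 φ ^ p ^ n =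
      PowerSeries.coeff 1 φ * PowerSeries.coeff (p ^ n) (nSeries F p) := by
    rw [← coeff_subst_of_X_pow_dvd_outer hom.1 hg, ← key,
      coeff_subst_of_X_pow_dvd_inner hom.1 hf (lt_two_mul_self (pow_pos hp.pos n))]
  refine ⟨PowerSeries.X_pow_dvd_iff.mp hg, hrule, ?_, ?_⟩
  · rw [← hc.mul_right_eq_zero, ← hrule, (hc.pow _).mul_left_eq_zero]
  · rw [← hc.mul_left_iff, ← hrule, (hc.pow _).mul_right_iff]

/-- Height is an isomorphism invariant, and under an isomorphism `φ : F → G` with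
linear coefficient `c`, the coefficients `a`, `b` of `x^{p^n}` in the `p`-series of
`F`, `G` (for `F` of height `≥ n`) transform by `b·c^{p^n} = c·a`.  This is the
transformation rule making `v_n` a section of `ω^{⊗(p^n−1)}`. -/
theorem vn_transformation_rule (p : ℕ) (hp : p.Prime) (A : Type*) [CommRing A]
    (hchar : (p : A) = 0) (n : ℕ)
    (F G : MvPowerSeries (Fin 2) A) (hF : IsFGL F) (hG : IsFGL G)
    (φ : PowerSeries A) (hφ : IsIso F G φ)
    (hht : ∀ i < p ^ n, PowerSeries.coeff i (nSeries F p) = 0) :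
    (∀ i < p ^ n, PowerSeries.coeff i (nSeries G p) = 0) ∧
    PowerSeries.coeff (p ^ n) (nSeries G p) * PowerSeries.coeff 1 φ ^ p ^ n =
      PowerSeries.coeff 1 φ * PowerSeries.coeff (p ^ n) (nSeries F p) ∧
    (PowerSeries.coeff (p ^ n) (nSeries F p) = 0 ↔
      PowerSeries.coeff (p ^ n) (nSeries G p) = 0) ∧
    (IsUnit (PowerSeries.coeff (p ^ n) (nSeries F p)) ↔
      IsUnit (PowerSeries.coeff (p ^ n) (nSeries G p))) :=
  vn_transformation_rule_general p hp A n F G hF hG φ hφ hht
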